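/- Let B be a Garside shadow in (W,S), let g ∈ W and s ∈ S with ℓ(sg) > ℓ(g). If s ⪯ ν_B(sg), then π_B(g⁻¹) = π_B((sg)⁻¹), and consequently ν_B(sg) = s·ν_B(g). -/
import Mathlib


open CoxeterSystem

variable {ι W : Type} [Group W] {cm : CoxeterMatrix ι}

/-- The right weak order on `W`: `g ⪯ h` iff `ℓ(g) + ℓ(g⁻¹h) = ℓ(h)`. -/
def WLe (cs : CoxeterSystem cm W) (g h : W) : Prop :=
  cs.length g + cs.length (g⁻¹ * h) = cs.length h

/-- `w` is a suffix of `g` if `g = u * w` with `ℓ(g) = ℓ(u) + ℓ(w)`. -/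
def IsSuffixOf (cs : CoxeterSystem cm W) (w g : W) : Prop :=
  ∃ u : W, g = u * w ∧ cs.length g = cs.length u + cs.length w

/-- `j` is the join (least upper bound) of `X` with respect to the right weak order. -/
def IsJoin (cs : CoxeterSystem cm W) (X : Set W) (j : W) : Prop :=
  (∀ x ∈ X, WLe cs x j) ∧ ∀ u : W, (∀ x ∈ X, WLe cs x u) → WLe cs j u

/-- A Garside shadow: a subset of `W` containing all simple reflections, closed under
existing joins and under taking suffixes. -/
def IsGarsideShadow (cs : CoxeterSystem cm W) (B : Set W) : Prop :=
  (∀ i : ι, cs.simple i ∈ B) ∧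
  (∀ X : Set W, X ⊆ B → ∀ j : W, IsJoin cs X j → j ∈ B) ∧
  (∀ b ∈ B, ∀ w : W, IsSuffixOf cs w b → w ∈ B)

/-- `π` is the `B`-projection: `π g` is the join of `{b ∈ B : b ⪯ g}` and lies in `B`. -/
def IsGarsideProjection (cs : CoxeterSystem cm W) (B : Set W) (π : W → W) : Prop :=
  ∀ g : W, π g ∈ B ∧ IsJoin cs {b : W | b ∈ B ∧ WLe cs b g} (π g)

/-- The voracious projection with respect to `π = π_B`: `ν_B(g) = g · π_B(g⁻¹)`. -/
def vor (π : W → W) (g : W) : W := g * π g⁻¹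

/-- The language `L_g`, defined inductively: `L_id = {ε}` and
`L_g = {uv : u ∈ L_{ν_B(g)}, v a minimal length word representing ν_B(g)⁻¹g}`. -/
inductive VorL (cs : CoxeterSystem cm W) (π : W → W) : W → List ι → Prop
  | nil : VorL cs π 1 []
  | step {g : W} {u v : List ι} (hg : g ≠ 1) (hu : VorL cs π (vor π g) u)
      (hv : cs.wordProd v = (vor π g)⁻¹ * g)
      (hmin : v.length = cs.length ((vor π g)⁻¹ * g)) :
      VorL cs π g (u ++ v)

/-- The voracious language `V_B = ⋃_{g ∈ W} L_g`. -/
def VorLang (cs : CoxeterSystem cm W) (π : W → W) : Language ι :=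
  {v : List ι | ∃ g : W, VorL cs π g v}

/-- The reflection `r` separates `g` from `h`. -/
def SepElem (cs : CoxeterSystem cm W) (r g h : W) : Prop :=
  Xor' (cs.length (r * g) < cs.length g) (cs.length (r * h) < cs.length h)

/-- The reflection `r'` separates `g` from the wall of the reflection `r`. -/
def SepWall (cs : CoxeterSystem cm W) (r' g r : W) : Prop :=
  ∀ h : W, (∃ i : ι, r * h = h * cs.simple i) → SepElem cs r' g h

/-- The wall of the reflection `r` is `m`-close to `g`: at most `m` reflections
separate `g` from the wall of `r`. -/
def MClose (cs : CoxeterSystem cm W) (m : ℕ) (g r : W) : Prop :=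
  ∃ F : Finset W, F.card ≤ m ∧
    ∀ r' : W, cs.IsReflection r' → SepWall cs r' g r → r' ∈ F


lemma wle_trans (cs : CoxeterSystem cm W) {a b c : W}
    (h1 : WLe cs a b) (h2 : WLe cs b c) : WLe cs a c := by
  unfold WLe at *
  have t1 : cs.length (a⁻¹ * c) ≤ cs.length (a⁻¹ * b) + cs.length (b⁻¹ * c) := by
    have := cs.length_mul_le (a⁻¹ * b) (b⁻¹ * c)
    simpa [mul_assoc] using this
  have t2 : cs.length c ≤ cs.length a + cs.length (a⁻¹ * c) := by
    have := cs.length_mul_le a (a⁻¹ * c)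
    simpa using this
  omega

lemma wle_antisymm (cs : CoxeterSystem cm W) {a b : W}
    (h1 : WLe cs a b) (h2 : WLe cs b a) : a = b := by
  unfold WLe at *
  have : cs.length (a⁻¹ * b) = 0 := by omega
  have := cs.length_eq_zero_iff.mp this
  have : a * (a⁻¹ * b) = a * 1 := by rw [this]
  simpa using this.symm

/-- If `ℓ(sg) > ℓ(g)` and `s ⪯ ν_B(sg)`, then
`π_B(g⁻¹) = π_B((sg)⁻¹)`, and consequently `ν_B(sg) = s·ν_B(g)`. -/
theorem vor_of_simple_le [Finite ι] (cs : CoxeterSystem cm W)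
    (B : Set W) (hB : IsGarsideShadow cs B)
    (piB : W → W) (hpi : IsGarsideProjection cs B piB)
    (g : W) (s : ι) (hlen : cs.length g < cs.length (cs.simple s * g))
    (hle : WLe cs (cs.simple s) (vor piB (cs.simple s * g))) :
    piB g⁻¹ = piB (cs.simple s * g)⁻¹ ∧
    vor piB (cs.simple s * g) = cs.simple s * vor piB g := by
  set σ := cs.simple s with hσ
  set h := σ * g with hh
  set p := piB h⁻¹ with hp
  set q := piB g⁻¹ with hq
  have hlh : cs.length h = cs.length g + 1 := by
    rcases cs.length_simple_mul g s with h1 | h1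
    · rw [← hσ, ← hh] at h1; exact h1
    · rw [← hσ, ← hh] at h1; omega
  -- p ⪯ h⁻¹
  have hpB : p ∈ B := (hpi h⁻¹).1
  have hph : WLe cs p h⁻¹ :=
    (hpi h⁻¹).2.2 h⁻¹ (fun x hx => hx.2)
  -- lengths
  have e1 : cs.length p + cs.length (p⁻¹ * h⁻¹) = cs.length h⁻¹ := hph
  have e1' : cs.length (p⁻¹ * h⁻¹) = cs.length (h * p) := by
    rw [← cs.length_inv (h * p)]; simp [mul_inv_rev]
  -- from hle : 1 + ℓ(g * p) = ℓ(h * p)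
  have e2 : 1 + cs.length (g * p) = cs.length (h * p) := by
    have := hle
    unfold WLe vor at this
    have hσ1 : cs.length σ = 1 := by rw [hσ]; exact cs.length_simple s
    rw [hσ1] at this
    have harg : σ⁻¹ * (h * piB h⁻¹) = g * p := by
      rw [hp, hh]; group
    rw [harg] at this
    exact this
  have e3 : cs.length p + cs.length (g * p) = cs.length g := by
    rw [cs.length_inv] at e1
    omega
  -- p ⪯ g⁻¹
  have hpg : WLe cs p g⁻¹ := by
    unfold WLe
    have : cs.length (p⁻¹ * g⁻¹) = cs.length (g * p) := by
      rw [← cs.length_inv (g * p)]; simp [mul_inv_rev]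
    rw [this, cs.length_inv]
    exact e3
  -- p ⪯ q
  have hpq : WLe cs p q := (hpi g⁻¹).2.1 p ⟨hpB, hpg⟩
  -- g⁻¹ ⪯ h⁻¹
  have hgh : WLe cs g⁻¹ h⁻¹ := by
    unfold WLe
    have : g⁻¹⁻¹ * h⁻¹ = σ⁻¹ := by
      simp only [hh]; group
    rw [this, cs.inv_simple, cs.length_simple, cs.length_inv, cs.length_inv, hlh]
  -- q ⪯ p
  have hqp : WLe cs q p := by
    refine (hpi g⁻¹).2.2 p (fun x hx => ?_)
    exact (hpi h⁻¹).2.1 x ⟨hx.1, wle_trans cs hx.2 hgh⟩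
  have hqep : q = p := wle_antisymm cs hpq hqp |>.symm
  constructor
  · exact hqep
  · show h * piB h⁻¹ = σ * (g * piB g⁻¹)
    have : piB g⁻¹ = piB h⁻¹ := hqep
    rw [this, hh, mul_assoc]
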